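/- For all integers k ≥ 0, τ ≥ 1 and every real κ with 0 < κ ≤ 1, there exists an integer K with the following property: for every blockade B = (B_1, …, B_K) of width W in a graph, there is an equicardinal minor B' of B of length k and width at least κ^{2^K·τ^τ}·W, such that B' is τ-support-uniform and (κ, τ)-support-invariant. -/

import Mathlib

open Finset

open scoped Classical

variable {V : Type*}

/-- No edges between `A` and `B`. -/
def Anticomplete (G : SimpleGraph V) (A B : Finset V) : Prop :=
  ∀ a ∈ A, ∀ b ∈ B, ¬ G.Adj a b

/-- All edges between `A` and `B` are present. -/
def CompletePair (G : SimpleGraph V) (A B : Finset V) : Prop :=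
  ∀ a ∈ A, ∀ b ∈ B, G.Adj a b

/-- `G` is `ε`-coherent. -/
def Coherent (G : SimpleGraph V) [Fintype V] (ε : ℝ) : Prop :=
  1 < Fintype.card V ∧
  (∀ v : V, (G.degree v : ℝ) < ε * Fintype.card V) ∧
  ¬ ∃ A B : Finset V, Disjoint A B ∧ Anticomplete G A B ∧
      ε * Fintype.card V ≤ A.card ∧ ε * Fintype.card V ≤ B.card

/-- `G` contains an induced copy of `H`. -/
def Contains {W : Type*} (G : SimpleGraph V) (H : SimpleGraph W) : Prop :=
  ∃ f : W ↪ V, ∀ a b, G.Adj (f a) (f b) ↔ H.Adj a b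

/-- Size of the largest clique. -/
noncomputable def cliqueNumber (G : SimpleGraph V) [Fintype V] : ℕ :=
  sSup {n | ∃ s : Finset V, G.IsNClique n s}

/-- A blockade: pairwise disjoint nonempty blocks. -/
def IsBlockade {K : ℕ} (B : Fin K → Finset V) : Prop :=
  (∀ i, (B i).Nonempty) ∧ Pairwise fun i j => Disjoint (B i) (B j)

/-- Width of a blockade: minimum block size. -/
noncomputable def blockWidth {K : ℕ} (B : Fin K → Finset V) : ℕ :=
  ⨅ i, (B i).card

/-- A rainbow copy of the ordered graph `J` with blocks given by the strictly
monotone map `ι`. -/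
def RainbowCopy (G : SimpleGraph V) {K : ℕ} (B : Fin K → Finset V) {m : ℕ}
    (J : SimpleGraph (Fin m)) (ι : Fin m → Fin K) : Prop :=
  StrictMono ι ∧ ∃ f : Fin m → V, (∀ a, f a ∈ B (ι a)) ∧
    ∀ a b, G.Adj (f a) (f b) ↔ J.Adj a b

/-- The trace of the ordered graph `J` relative to a blockade. -/
def Trace (G : SimpleGraph V) {K : ℕ} (B : Fin K → Finset V) {m : ℕ}
    (J : SimpleGraph (Fin m)) : Set (Fin m → Fin K) :=
  {ι | RainbowCopy G B J ι}

/-- `τ`-support-uniform: for every ordered tree with at most `τ` vertices, the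
trace is empty or everything. -/
def SupportUniform (G : SimpleGraph V) {K : ℕ} (B : Fin K → Finset V) (τ : ℕ) : Prop :=
  ∀ m : ℕ, m ≤ τ → ∀ J : SimpleGraph (Fin m), J.IsTree →
    Trace G B J = ∅ ∨ Trace G B J = {ι | StrictMono ι}

/-- `B'` is a contraction of `B`. -/
def IsContraction {K : ℕ} (B' B : Fin K → Finset V) : Prop :=
  ∀ i, (B' i).Nonempty ∧ B' i ⊆ B i

/-- `(κ, τ)`-support-invariant: contractions of width at least `κ` times the
width have the same traces of ordered trees with at most `τ` vertices. -/
def SupportInvariant (G : SimpleGraph V) {K : ℕ} (B : Fin K → Finset V)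
    (κ : ℝ) (τ : ℕ) : Prop :=
  ∀ B' : Fin K → Finset V, IsContraction B' B →
    (∀ i, κ * blockWidth B ≤ ((B' i).card : ℝ)) →
    ∀ m : ℕ, m ≤ τ → ∀ J : SimpleGraph (Fin m), J.IsTree →
      Trace G B' J = Trace G B J

/-- `X` `lam`-covers the block `Bi` (with respect to width `w`). -/
def Covers (G : SimpleGraph V) (X Bi : Finset V) (lam : ℝ) (w : ℕ) : Prop :=
  lam * w ≤ ((Bi.filter fun v => ∃ x ∈ X, G.Adj x v).card : ℝ)

/-- `X` `lam`-misses the block `Bi` (with respect to width `w`). -/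
def Misses (G : SimpleGraph V) (X Bi : Finset V) (lam : ℝ) (w : ℕ) : Prop :=
  lam * w ≤ ((Bi.filter fun v => ∀ x ∈ X, ¬ G.Adj x v).card : ℝ)

/-- `lam`-concave (for an equicardinal blockade of width `w`). -/
def Concave (G : SimpleGraph V) {K : ℕ} (B : Fin K → Finset V) (lam : ℝ) (w : ℕ) : Prop :=
  ∀ h1 h2 h3 : Fin K, h1 < h2 → h2 < h3 →
    ∀ X : Finset V,
      (∀ x ∈ X, ∃ i : Fin K, i ≠ h1 ∧ i ≠ h2 ∧ i ≠ h3 ∧ x ∈ B i) →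
      ¬ (Covers G X (B h2) lam w ∧ Misses G X (B h1) lam w ∧ Misses G X (B h3) lam w)

/-- `G` contains a `B`-rainbow induced copy of `T`. -/
def RainbowContains (G : SimpleGraph V) {K : ℕ} (B : Fin K → Finset V)
    {W' : Type*} (T : SimpleGraph W') : Prop :=
  ∃ f : W' ↪ V,
    (∀ a b, G.Adj (f a) (f b) ↔ T.Adj a b) ∧
    (∀ a, ∃ i, f a ∈ B i) ∧
    ∀ a b, a ≠ b → ∀ i, f a ∈ B i → f b ∉ B i

/-- Vertices of the tree `T(δ, η)`: sequences of length at most `η` over `Fin δ`. -/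
def Tvert (δ η : ℕ) : Type := {l : List (Fin δ) // l.length ≤ η}

/-- The tree `T(δ, η)` rooted at the empty sequence: every vertex of depth
`< η` has exactly `δ` children, and all leaves are at depth exactly `η`. -/
def Ttree (δ η : ℕ) : SimpleGraph (Tvert δ η) :=
  SimpleGraph.fromRel fun a b => ∃ x : Fin δ, b.1 = x :: a.1

/-!
Count the triples `(m, J, ι)` with `m ≤ τ` and `ι` in the trace of `J`; for `K` blocks this is
polynomial in `K`, hence at most `2 ^ K` once `K` is large. If an equicardinal blockade of width
`w` is not `(κ, τ)`-support-invariant, some contraction of width `≥ κ w` has a smaller trace, and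
trimming its blocks to a common size strictly lowers the count. So at most `2 ^ K τ ^ τ` such
rounds lead to a support-invariant equicardinal contraction of width `≥ κ ^ (2 ^ K τ ^ τ) W`, and
support-invariance passes to sub-blockades. Colouring each set `s` of block indices by the ordered
graphs on at most `τ` vertices having a rainbow copy with support exactly `s`, hypergraph Ramsey
yields `k` blocks on which the colour depends only on `|s|`: that is support-uniformity.
-/

section Ramsey

universe u

variable {C : Type*}

theorem exists_minHomogeneous_subset {m : ℕ}
    (hm : ∀ k, ∃ R, ∀ (α : Type u) [LinearOrder α] (A : Finset α) (f : Finset α → C),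
      R ≤ #A → ∃ Y ⊆ A, k ≤ #Y ∧ ∃ c, ∀ s ⊆ Y, #s = m → f s = c) (L : ℕ) :
    ∃ R, ∀ (α : Type u) [LinearOrder α] (A : Finset α) (f : Finset α → C),
      R ≤ #A → ∃ Y ⊆ A, #Y = L ∧ ∃ g : α → C,
        ∀ s ⊆ Y, #s = m + 1 → ∀ hs : s.Nonempty, f s = g (s.min' hs) := by
  induction L with
  | zero =>
    refine ⟨0, fun α _ A f _ => ⟨∅, empty_subset A, card_empty, fun _ => f ∅, ?_⟩⟩
    intro s hs hcard
    simp [subset_empty.mp hs] at hcard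
  | succ L ih =>
    obtain ⟨RL, hRL⟩ := ih
    obtain ⟨R, hR⟩ := hm RL
    refine ⟨R + 1, fun α _ A f hA => ?_⟩
    have hA : A.Nonempty := card_pos.mp (by omega)
    set v := A.min' hA
    -- Colour the `m`-sets above `v` by the colour of their extension by `v`.
    obtain ⟨Z, hZA, hZ, c, hc⟩ := hR α (A.erase v) (fun s => f (insert v s))
      (by rw [card_erase_of_mem (A.min'_mem hA)]; omega)
    obtain ⟨Y, hYZ, hY, g, hg⟩ := hRL α Z f hZ
    have hvY : v ∉ Y := fun h => notMem_erase v A (hZA (hYZ h))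
    have hYA : insert v Y ⊆ A :=
      insert_subset (A.min'_mem hA) ((hYZ.trans hZA).trans (erase_subset v A))
    refine ⟨insert v Y, hYA, by rw [card_insert_of_notMem hvY, hY],
      Function.update g v c, fun s hs hcard hsne => ?_⟩
    by_cases hvs : v ∈ s
    · have hmin : s.min' hsne = v :=
        le_antisymm (s.min'_le v hvs) (A.min'_le _ (hYA (hs (s.min'_mem hsne))))
      have hsv : s.erase v ⊆ Z := fun x hx =>
        hYZ ((mem_insert.mp (hs (mem_of_mem_erase hx))).resolve_left (ne_of_mem_erase hx))
      rw [hmin, Function.update_self, ← hc _ hsv (by rw [card_erase_of_mem hvs, hcard]; rfl),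
        insert_erase hvs]
    · have hsY : s ⊆ Y := fun x hx =>
        (mem_insert.mp (hs hx)).resolve_left fun h => hvs (h ▸ hx)
      have hmin : s.min' hsne ≠ v := fun h => hvs (h ▸ s.min'_mem hsne)
      rw [hg s hsY hcard hsne, Function.update_of_ne hmin]

theorem exists_monochromatic_subset [Fintype C] (m k : ℕ) :
    ∃ R, ∀ (α : Type u) [LinearOrder α] (A : Finset α) (f : Finset α → C),
      R ≤ #A → ∃ Y ⊆ A, k ≤ #Y ∧ ∃ c, ∀ s ⊆ Y, #s = m → f s = c := by
  induction m generalizing k with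
  | zero =>
    exact ⟨k, fun α _ A f hA =>
      ⟨A, subset_rfl, hA, f ∅, fun s _ hs => by rw [card_eq_zero.mp hs]⟩⟩
  | succ m ih =>
    obtain ⟨R, hR⟩ := exists_minHomogeneous_subset ih (Fintype.card C * k)
    refine ⟨R, fun α _ A f hA => ?_⟩
    obtain ⟨Y, hYA, hY, g, hg⟩ := hR α A f hA
    have : Nonempty C := ⟨f ∅⟩
    -- Pigeonhole on the colour of the minimum.
    obtain ⟨c, -, hc⟩ := exists_le_card_fiber_of_mul_le_card_of_maps_to
      (fun x _ => mem_univ (g x)) univ_nonempty (by rw [card_univ, hY])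
    refine ⟨{x ∈ Y | g x = c}, (filter_subset _ Y).trans hYA, hc, c, fun s hs hcard => ?_⟩
    have hsne : s.Nonempty := card_pos.mp (by omega)
    rw [hg s (hs.trans (filter_subset _ Y)) hcard hsne]
    exact (mem_filter.mp (hs (s.min'_mem hsne))).2

theorem exists_monochromatic_subset_of_card_le [Fintype C] (t k : ℕ) :
    ∃ R, ∀ (α : Type u) [LinearOrder α] (A : Finset α) (f : Finset α → C),
      R ≤ #A → ∃ Y ⊆ A, k ≤ #Y ∧ ∀ m ≤ t, ∃ c, ∀ s ⊆ Y, #s = m → f s = c := by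
  induction t generalizing k with
  | zero =>
    obtain ⟨R, hR⟩ := exists_monochromatic_subset (C := C) 0 k
    refine ⟨R, fun α _ A f hA => ?_⟩
    obtain ⟨Y, hYA, hY, hc⟩ := hR α A f hA
    exact ⟨Y, hYA, hY, fun m hm => (Nat.le_zero.mp hm) ▸ hc⟩
  | succ t ih =>
    obtain ⟨Rt, hRt⟩ := ih k
    obtain ⟨R, hR⟩ := exists_monochromatic_subset (C := C) (t + 1) Rt
    refine ⟨R, fun α _ A f hA => ?_⟩
    obtain ⟨Z, hZA, hZ, c, hc⟩ := hR α A f hA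
    obtain ⟨Y, hYZ, hY, hYc⟩ := hRt α Z f hZ
    refine ⟨Y, hYZ.trans hZA, hY, fun m hm => ?_⟩
    obtain hm | rfl := Nat.le_succ_iff.mp hm
    · exact hYc m hm
    · exact ⟨c, fun s hs => hc s (hs.trans hYZ)⟩

end Ramsey

section Traces

variable {G : SimpleGraph V} {K : ℕ}

theorem blockWidth_le (B : Fin K → Finset V) (i : Fin K) : blockWidth B ≤ #(B i) :=
  ciInf_le (OrderBot.bddBelow _) i

theorem blockWidth_eq_of_card_eq (hK : 0 < K) {B : Fin K → Finset V} {w : ℕ}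
    (h : ∀ i, #(B i) = w) : blockWidth B = w := by
  have : Nonempty (Fin K) := ⟨⟨0, hK⟩⟩
  simp only [blockWidth, h, ciInf_const]

theorem IsBlockade.blockWidth_pos (hK : 0 < K) {B : Fin K → Finset V} (hB : IsBlockade B) :
    0 < blockWidth B := by
  have : Nonempty (Fin K) := ⟨⟨0, hK⟩⟩
  obtain ⟨i, hi⟩ := exists_eq_ciInf_of_finite (f := fun i => #(B i))
  rw [blockWidth, ← hi]
  exact (hB.1 i).card_pos

theorem blockWidth_fin_zero (B : Fin 0 → Finset V) : blockWidth B = 0 := by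
  simp [blockWidth]

@[simp]
theorem mem_trace {B : Fin K → Finset V} {m : ℕ} {J : SimpleGraph (Fin m)} {ι : Fin m → Fin K} :
    ι ∈ Trace G B J ↔ RainbowCopy G B J ι :=
  Iff.rfl

theorem trace_mono {B B' : Fin K → Finset V} (h : ∀ i, B' i ⊆ B i) {m : ℕ}
    (J : SimpleGraph (Fin m)) : Trace G B' J ⊆ Trace G B J :=
  fun _ ⟨hι, f, hf, hadj⟩ => ⟨hι, f, fun a => h _ (hf a), hadj⟩

theorem trace_fin_zero_eq_empty (B : Fin 0 → Finset V) {m : ℕ} {J : SimpleGraph (Fin m)}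
    (hJ : J.IsTree) : Trace G B J = ∅ := by
  obtain ⟨a⟩ := hJ.connected.nonempty
  exact Set.eq_empty_iff_forall_notMem.mpr fun ι _ => (ι a).elim0

theorem rainbowCopy_comp_iff {k : ℕ} {σ : Fin k → Fin K} (hσ : StrictMono σ)
    (B : Fin K → Finset V) {m : ℕ} (J : SimpleGraph (Fin m)) (ι : Fin m → Fin k) :
    RainbowCopy G (B ∘ σ) J ι ↔ StrictMono ι ∧ RainbowCopy G B J (σ ∘ ι) :=
  ⟨fun ⟨hι, hcopy⟩ => ⟨hι, hσ.comp hι, hcopy⟩, fun ⟨hι, _, hcopy⟩ => ⟨hι, hcopy⟩⟩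

abbrev TraceIndex (τ K : ℕ) : Type := Σ m : Fin (τ + 1), SimpleGraph (Fin m) × (Fin m → Fin K)

noncomputable def traceCount (G : SimpleGraph V) (B : Fin K → Finset V) (τ : ℕ) : ℕ :=
  {x : TraceIndex τ K | x.2.2 ∈ Trace G B x.2.1}.ncard

theorem traceCount_le_card (B : Fin K → Finset V) (τ : ℕ) :
    traceCount G B τ ≤ Fintype.card (TraceIndex τ K) :=
  (Set.ncard_le_card _).trans_eq Nat.card_eq_fintype_card

theorem traceCount_lt_of_trace_ne {B B' : Fin K → Finset V} (h : ∀ i, B' i ⊆ B i) {τ m : ℕ}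
    (hm : m ≤ τ) {J : SimpleGraph (Fin m)} (hJ : Trace G B' J ≠ Trace G B J) :
    traceCount G B' τ < traceCount G B τ := by
  obtain ⟨ι, hι, hι'⟩ := Set.exists_of_ssubset ((trace_mono h J).ssubset_of_ne hJ)
  refine Set.ncard_lt_ncard ⟨fun x hx => trace_mono h x.2.1 hx, fun hsub => hι' ?_⟩
  exact hsub (a := ⟨⟨m, by omega⟩, J, ι⟩) hι

theorem card_traceIndex_le (τ : ℕ) (hK : 0 < K) :
    Fintype.card (TraceIndex τ K) ≤
      (∑ m : Fin (τ + 1), Fintype.card (SimpleGraph (Fin m))) * K ^ τ := by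
  simp only [Fintype.card_sigma, Fintype.card_prod, Fintype.card_fun, Fintype.card_fin,
    sum_mul]
  exact sum_le_sum fun m _ => Nat.mul_le_mul_left _ (Nat.pow_le_pow_right hK (by omega))

end Traces

open Filter Asymptotics in
theorem eventually_mul_pow_le_two_pow (c d : ℕ) : ∀ᶠ n : ℕ in atTop, c * n ^ d ≤ 2 ^ n := by
  have hc : (0 : ℝ) < 1 / (c + 1) := by positivity
  filter_upwards [(isLittleO_pow_const_const_pow_of_one_lt (R := ℝ) d one_lt_two).bound hc]
    with n hn
  simp only [norm_pow, Real.norm_natCast, Real.norm_two] at hn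
  have : (c : ℝ) * n ^ d ≤ 2 ^ n := by
    calc (c : ℝ) * n ^ d ≤ (c + 1) * n ^ d := by gcongr; linarith
      _ ≤ (c + 1) * (1 / (c + 1) * 2 ^ n) := by gcongr
      _ = 2 ^ n := by field_simp
  exact_mod_cast this

theorem eventually_card_traceIndex_le (τ : ℕ) :
    ∀ᶠ K in Filter.atTop, Fintype.card (TraceIndex τ K) ≤ 2 ^ K := by
  filter_upwards [Filter.eventually_gt_atTop 0, eventually_mul_pow_le_two_pow _ τ] with K hK hpow
  exact (card_traceIndex_le τ hK).trans hpow

section Contraction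

variable {G : SimpleGraph V} {K : ℕ} {κ : ℝ} {τ : ℕ}

theorem exists_equicardinal_traceCount_lt (hK : 0 < K) (hκ : 0 < κ) {B : Fin K → Finset V}
    {w : ℕ} (hw : 0 < w) (hB : ∀ i, #(B i) = w) (h : ¬ SupportInvariant G B κ τ) :
    ∃ (B₃ : Fin K → Finset V) (w₃ : ℕ), 0 < w₃ ∧ (∀ i, B₃ i ⊆ B i) ∧ (∀ i, #(B₃ i) = w₃) ∧
      κ * w ≤ w₃ ∧ traceCount G B₃ τ < traceCount G B τ := by
  simp only [SupportInvariant, not_forall] at h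
  obtain ⟨D, hD, hDw, m, hm, J, -, hJ⟩ := h
  rw [blockWidth_eq_of_card_eq hK hB] at hDw
  have hle : ∀ i, ⌈κ * w⌉₊ ≤ #(D i) := fun i => Nat.ceil_le.mpr (hDw i)
  choose B₃ hB₃D hB₃ using fun i => exists_subset_card_eq (hle i)
  have hB₃B : ∀ i, B₃ i ⊆ B i := fun i => (hB₃D i).trans (hD i).2
  have hJ₃ : Trace G B₃ J ≠ Trace G B J := fun h =>
    hJ ((trace_mono (fun i => (hD i).2) J).antisymm (h ▸ trace_mono hB₃D J))
  exact ⟨B₃, _, Nat.ceil_pos.mpr (by positivity), hB₃B, hB₃, Nat.le_ceil _,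
    traceCount_lt_of_trace_ne hB₃B hm hJ₃⟩

theorem exists_equicardinal_supportInvariant (hK : 0 < K) (hκ0 : 0 < κ) (hκ1 : κ ≤ 1)
    (n : ℕ) {B : Fin K → Finset V} {w : ℕ} (hw : 0 < w) (hB : ∀ i, #(B i) = w)
    (hn : traceCount G B τ ≤ n) :
    ∃ (B₂ : Fin K → Finset V) (w₂ : ℕ), 0 < w₂ ∧ (∀ i, B₂ i ⊆ B i) ∧ (∀ i, #(B₂ i) = w₂) ∧
      κ ^ n * w ≤ w₂ ∧ SupportInvariant G B₂ κ τ := by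
  induction n generalizing B w with
  | zero =>
    have hinv : SupportInvariant G B κ τ := fun D hD _ m hm J _ => by_contra fun hJ =>
      Nat.not_lt_zero _ ((traceCount_lt_of_trace_ne (fun i => (hD i).2) hm hJ).trans_le hn)
    exact ⟨B, w, hw, fun _ => subset_rfl, hB, by simp, hinv⟩
  | succ n ih =>
    by_cases hinv : SupportInvariant G B κ τ
    · refine ⟨B, w, hw, fun _ => subset_rfl, hB, ?_, hinv⟩
      exact mul_le_of_le_one_left (Nat.cast_nonneg w) (pow_le_one₀ hκ0.le hκ1)
    obtain ⟨B₃, w₃, hw₃, hB₃B, hB₃, hww₃, hlt⟩ :=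
      exists_equicardinal_traceCount_lt hK hκ0 hw hB hinv
    obtain ⟨B₂, w₂, hw₂, hB₂B, hB₂, hww₂, hinv₂⟩ := ih hw₃ hB₃ (by omega)
    refine ⟨B₂, w₂, hw₂, fun i => (hB₂B i).trans (hB₃B i), hB₂, ?_, hinv₂⟩
    calc κ ^ (n + 1) * w = κ ^ n * (κ * w) := by ring
      _ ≤ κ ^ n * w₃ := by gcongr
      _ ≤ w₂ := hww₂

end Contraction

section SubBlockade

variable {G : SimpleGraph V} {K k : ℕ} {σ : Fin k → Fin K}

theorem SupportInvariant.comp {B : Fin K → Finset V} {κ : ℝ} {τ : ℕ}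
    (h : SupportInvariant G B κ τ) (hB : ∀ j, (B j).Nonempty) (hκ0 : 0 ≤ κ) (hκ1 : κ ≤ 1)
    (hσ : StrictMono σ) (hw : blockWidth B ≤ blockWidth (B ∘ σ)) :
    SupportInvariant G (B ∘ σ) κ τ := by
  intro D hD hDw m hm J hJ
  set E := Function.extend σ D B
  have hED : E ∘ σ = D := funext (hσ.injective.extend_apply D B)
  have hE : ∀ j, ((E j).Nonempty ∧ E j ⊆ B j) ∧ κ * blockWidth B ≤ #(E j) := by
    intro j
    by_cases hj : ∃ i, σ i = j
    · obtain ⟨i, rfl⟩ := hj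
      rw [show E (σ i) = D i from congrFun hED i]
      exact ⟨hD i, (mul_le_mul_of_nonneg_left (by exact_mod_cast hw) hκ0).trans (hDw i)⟩
    · rw [show E j = B j from Function.extend_apply' _ _ _ hj]
      have hBj : (blockWidth B : ℝ) ≤ #(B j) := by exact_mod_cast blockWidth_le B j
      exact ⟨⟨hB j, subset_rfl⟩, (mul_le_of_le_one_left (Nat.cast_nonneg _) hκ1).trans hBj⟩
  have hTrace := h E (fun j => (hE j).1) (fun j => (hE j).2) m hm J hJ
  ext ι
  rw [← hED]
  simp only [mem_trace, rainbowCopy_comp_iff hσ]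
  exact and_congr_right fun _ => Set.ext_iff.mp hTrace (σ ∘ ι)

def rainbowPattern (G : SimpleGraph V) (B : Fin K → Finset V) (τ : ℕ) (s : Finset (Fin K)) :
    (m : Fin (τ + 1)) → SimpleGraph (Fin m) → Prop :=
  fun _ J => ∃ ι ∈ Trace G B J, Set.range ι = s

theorem supportUniform_comp {B : Fin K → Finset V} {τ : ℕ} (hσ : StrictMono σ)
    {Y : Finset (Fin K)} (hσY : ∀ i, σ i ∈ Y)
    (hY : ∀ m ≤ τ, ∃ c, ∀ s ⊆ Y, #s = m → rainbowPattern G B τ s = c) :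
    SupportUniform G (B ∘ σ) τ := by
  have hcoe : ∀ {m : ℕ} (f : Fin m → Fin K), (univ.image f : Set (Fin K)) = Set.range f := by
    simp
  intro m hm J _
  refine (Trace G (B ∘ σ) J).eq_empty_or_nonempty.imp_right fun ⟨ι₀, hι₀⟩ => ?_
  obtain ⟨c, hc⟩ := hY m hm
  have hpattern : ∀ ι : Fin m → Fin k, StrictMono ι →
      (rainbowPattern G B τ (univ.image (σ ∘ ι)) ⟨m, by omega⟩ J ↔ c ⟨m, by omega⟩ J) := by
    intro ι hι
    rw [hc _ (fun x hx => by obtain ⟨a, -, rfl⟩ := mem_image.mp hx; exact hσY _)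
      (by rw [card_image_of_injective _ (hσ.comp hι).injective, card_univ, Fintype.card_fin])]
  ext ι
  refine ⟨fun h => h.1, fun hι => ?_⟩
  rw [mem_trace, rainbowCopy_comp_iff hσ] at hι₀ ⊢
  obtain ⟨ι', hι', hrange⟩ := (hpattern ι hι).mpr <|
    (hpattern ι₀ hι₀.1).mp ⟨σ ∘ ι₀, hι₀.2, (hcoe _).symm⟩
  refine ⟨hι, ?_⟩
  have : ι' = σ ∘ ι := (hι'.1.range_inj (hσ.comp hι)).mp (hrange.trans (hcoe _))
  exact this ▸ hι'

end SubBlockade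

theorem stmt9_general (k τ : ℕ) (κ : ℝ) (hκ0 : 0 < κ) (hκ1 : κ ≤ 1) :
    ∃ K : ℕ, ∀ (V : Type) (G : SimpleGraph V) (B : Fin K → Finset V),
      IsBlockade B →
      ∃ (σ : Fin k → Fin K) (B' : Fin k → Finset V),
        StrictMono σ ∧ (∀ i, (B' i).Nonempty ∧ B' i ⊆ B (σ i)) ∧
        (∀ i j, (B' i).card = (B' j).card) ∧
        κ ^ (2 ^ K * τ ^ τ) * (blockWidth B : ℝ) ≤ (blockWidth B' : ℝ) ∧
        SupportUniform G B' τ ∧ SupportInvariant G B' κ τ := by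
  rcases k.eq_zero_or_pos with rfl | hk
  · refine ⟨0, fun V G B _ => ⟨Fin.elim0, Fin.elim0, fun i => i.elim0, fun i => i.elim0,
      fun i => i.elim0, by simp [blockWidth_fin_zero], fun m _ J hJ => .inl ?_, ?_⟩⟩
    · exact trace_fin_zero_eq_empty _ hJ
    · intro D _ _ m _ J hJ
      rw [trace_fin_zero_eq_empty _ hJ, trace_fin_zero_eq_empty _ hJ]
  obtain ⟨R, hR⟩ := exists_monochromatic_subset_of_card_le
    (C := (m : Fin (τ + 1)) → SimpleGraph (Fin m) → Prop) τ k
  obtain ⟨K, hRK, hK, hcard⟩ := ((Filter.eventually_ge_atTop R).and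
    ((Filter.eventually_gt_atTop 0).and (eventually_card_traceIndex_le τ))).exists
  refine ⟨K, fun V G B hB => ?_⟩
  choose B₁ hB₁B hB₁ using fun i => exists_subset_card_eq (blockWidth_le B i)
  have hn : traceCount G B₁ τ ≤ 2 ^ K * τ ^ τ :=
    ((traceCount_le_card B₁ τ).trans hcard).trans (Nat.le_mul_of_pos_right _ Nat.pow_self_pos)
  obtain ⟨B₂, w, hw, hB₂B, hB₂, hBw, hinv⟩ :=
    exists_equicardinal_supportInvariant hK hκ0 hκ1 _ (hB.blockWidth_pos hK) hB₁ hn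
  obtain ⟨Y, -, hY, hmono⟩ := hR (Fin K) univ (rainbowPattern G B₂ τ) (by simpa using hRK)
  obtain ⟨Y₀, hY₀Y, hY₀⟩ := exists_subset_card_eq hY
  set σ := Y₀.orderEmbOfFin hY₀
  have hσw : blockWidth (B₂ ∘ σ) = w := blockWidth_eq_of_card_eq hk fun i => hB₂ (σ i)
  have hB₂w : blockWidth B₂ = w := blockWidth_eq_of_card_eq hK hB₂
  have hB₂ne : ∀ j, (B₂ j).Nonempty := fun j => card_pos.mp (hB₂ j ▸ hw)
  refine ⟨σ, B₂ ∘ σ, σ.strictMono, fun i => ⟨hB₂ne _, (hB₂B _).trans (hB₁B _)⟩,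
    fun i j => by simp [hB₂], hσw ▸ hBw,
    supportUniform_comp σ.strictMono (fun i => hY₀Y (orderEmbOfFin_mem Y₀ hY₀ i)) hmono,
    hinv.comp hB₂ne hκ0.le hκ1 σ.strictMono (hB₂w.trans hσw.symm).le⟩

theorem stmt9 (k τ : ℕ) (hτ : 1 ≤ τ) (κ : ℝ) (hκ0 : 0 < κ) (hκ1 : κ ≤ 1) :
    ∃ K : ℕ, ∀ (V : Type) (G : SimpleGraph V) (B : Fin K → Finset V),
      IsBlockade B →
      ∃ (σ : Fin k → Fin K) (B' : Fin k → Finset V),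
        StrictMono σ ∧ (∀ i, (B' i).Nonempty ∧ B' i ⊆ B (σ i)) ∧
        (∀ i j, (B' i).card = (B' j).card) ∧
        κ ^ (2 ^ K * τ ^ τ) * (blockWidth B : ℝ) ≤ (blockWidth B' : ℝ) ∧
        SupportUniform G B' τ ∧ SupportInvariant G B' κ τ :=
  stmt9_general k τ κ hκ0 hκ1
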